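/- arXiv:0803.2338 — 4 statements merged into one kernel-verified Lean document; each statement's English description precedes it below -/
import Mathlib

section
/- An interval valued fuzzy set F of a pseudo BL-algebra A is an interval valued fuzzy filter of A if and only if for every interval number t with [0,0] < t ≤ [1,1], each nonempty level subset F_t = {x ∈ A : μ_F(x) ≥ t} is a filter of A. -/
noncomputable section

universe u

class PseudoBL (A : Type u) extends Lattice A, BoundedOrder A where
  mul : A → A → A
  rimp : A → A → A
  limp : A → A → A
  mul_assoc : ∀ x y z : A, mul (mul x y) z = mul x (mul y z)
  mul_top : ∀ x : A, mul x ⊤ = x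
  top_mul : ∀ x : A, mul ⊤ x = x
  res_rimp : ∀ x y z : A, mul x y ≤ z ↔ x ≤ rimp y z
  res_limp : ∀ x y z : A, mul x y ≤ z ↔ y ≤ limp x z
  inf_eq_rimp : ∀ x y : A, x ⊓ y = mul (rimp x y) x
  inf_eq_limp : ∀ x y : A, x ⊓ y = mul x (limp x y)
  sup_rimp_eq_top : ∀ x y : A, rimp x y ⊔ rimp y x = ⊤
  sup_limp_eq_top : ∀ x y : A, limp x y ⊔ limp y x = ⊤

open PseudoBL

def PseudoBL.IsFilter {A : Type u} [PseudoBL A] (I : Set A) : Prop :=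
  I.Nonempty ∧ (∀ x ∈ I, ∀ y ∈ I, mul x y ∈ I) ∧ ∀ x ∈ I, ∀ y : A, x ≤ y → y ∈ I

def PseudoBL.IsImplicativeFilter {A : Type u} [PseudoBL A] (I : Set A) : Prop :=
  PseudoBL.IsFilter I ∧ ∀ x y : A,
    (limp (rimp x y) x ∈ I → x ∈ I) ∧ (rimp (limp x y) x ∈ I → x ∈ I)

/-- Interval numbers `[a⊥, a⊤]` with `0 ≤ a⊥ ≤ a⊤ ≤ 1`. -/
structure IV where
  lo : ℝ
  hi : ℝ
  lo_nonneg : 0 ≤ lo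
  lo_le_hi : lo ≤ hi
  hi_le_one : hi ≤ 1

namespace IV

instance : LE IV := ⟨fun a b => a.lo ≤ b.lo ∧ a.hi ≤ b.hi⟩
instance : LT IV := ⟨fun a b => a ≤ b ∧ a ≠ b⟩

def rmin (a b : IV) : IV :=
  ⟨min a.lo b.lo, min a.hi b.hi, le_min a.lo_nonneg b.lo_nonneg,
    min_le_min a.lo_le_hi b.lo_le_hi, (min_le_left _ _).trans a.hi_le_one⟩

def rmax (a b : IV) : IV :=
  ⟨max a.lo b.lo, max a.hi b.hi, a.lo_nonneg.trans (le_max_left _ _),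
    max_le_max a.lo_le_hi b.lo_le_hi, max_le a.hi_le_one b.hi_le_one⟩

def mk' (a b : ℝ) (h0 : 0 ≤ a) (h : a ≤ b) (h1 : b ≤ 1) : IV := ⟨a, b, h0, h, h1⟩

def zero : IV := ⟨0, 0, le_refl 0, le_refl 0, zero_le_one⟩

def one : IV := ⟨1, 1, zero_le_one, le_refl 1, le_refl 1⟩

def half : IV := ⟨1/2, 1/2, by norm_num, le_refl _, by norm_num⟩

end IV

open IV

/-- The level subset `F_t = {x : μ_F(x) ≥ t}`. -/
def lvl {A : Type u} [PseudoBL A] (F : A → IV) (t : IV) : Set A := {x | t ≤ F x}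

/-- `(F5)`–`(F6)`: interval valued `(∈,∈∨q)`-fuzzy filter. -/
def InqFilter {A : Type u} [PseudoBL A] (F : A → IV) : Prop :=
  (∀ x y : A, rmin (F x) (rmin (F y) half) ≤ F (mul x y)) ∧
  ∀ x y : A, x ≤ y → rmin (F x) half ≤ F y

/-- `(F13)`. -/
def InqImplicative {A : Type u} [PseudoBL A] (F : A → IV) : Prop :=
  InqFilter F ∧ ∀ x y : A,
    rmin (F (limp (rimp x y) x)) half ≤ F x ∧
    rmin (F (rimp (limp x y) x)) half ≤ F x

/-- `(F16)`: interval valued `(∈,∈∨q)`-fuzzy MV-filter. -/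
def InqMV {A : Type u} [PseudoBL A] (F : A → IV) : Prop :=
  InqFilter F ∧ ∀ x y : A,
    rmin (F (rimp x y)) half ≤ F (rimp (limp (rimp y x) x) y) ∧
    rmin (F (limp x y)) half ≤ F (limp (rimp (limp y x) x) y)

/-- `(F17)`: interval valued `(∈,∈∨q)`-fuzzy G-filter. -/
def InqG {A : Type u} [PseudoBL A] (F : A → IV) : Prop :=
  InqFilter F ∧ ∀ x y : A,
    rmin (F (rimp x (rimp x y))) half ≤ F (rimp x y) ∧
    rmin (F (limp x (limp x y))) half ≤ F (limp x y)

/-- Interval valued fuzzy implicative filter with thresholds `(α, β)`. -/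
def ThresholdImplicative {A : Type u} [PseudoBL A] (F : A → IV) (α β : IV) : Prop :=
  (∀ x y : A, rmin (F x) (rmin (F y) β) ≤ rmax (F (mul x y)) α) ∧
  (∀ x y : A, x ≤ y → rmin (F x) β ≤ rmax (F y) α) ∧
  (∀ x y : A, rmin (F (limp (rimp x y) x)) β ≤ rmax (F x) α) ∧
  (∀ x y : A, rmin (F (rimp (limp x y) x)) β ≤ rmax (F x) α)

lemma IV.le_def {a b : IV} : a ≤ b ↔ a.lo ≤ b.lo ∧ a.hi ≤ b.hi := Iff.rfl

lemma IV.zero_le (a : IV) : IV.zero ≤ a :=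
  ⟨a.lo_nonneg, a.lo_nonneg.trans a.lo_le_hi⟩

lemma IV.le_one (a : IV) : a ≤ IV.one :=
  ⟨a.lo_le_hi.trans a.hi_le_one, a.hi_le_one⟩

lemma IV.rmin_le_left (a b : IV) : rmin a b ≤ a := ⟨min_le_left _ _, min_le_left _ _⟩
lemma IV.rmin_le_right (a b : IV) : rmin a b ≤ b := ⟨min_le_right _ _, min_le_right _ _⟩

lemma IV.le_trans' {a b c : IV} (h1 : a ≤ b) (h2 : b ≤ c) : a ≤ c :=
  ⟨h1.1.trans h2.1, h1.2.trans h2.2⟩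

lemma IV.eq_zero_or_zero_lt (a : IV) : a = IV.zero ∨ IV.zero < a := by
  by_cases h : a = IV.zero
  · exact Or.inl h
  · exact Or.inr ⟨a.zero_le, fun h' => h h'.symm⟩

theorem stmt6 {A : Type u} [PseudoBL A] (F : A → IV) :
    ((∀ x y : A, rmin (F x) (F y) ≤ F (mul x y)) ∧ ∀ x y : A, x ≤ y → F x ≤ F y) ↔
      ∀ t : IV, IV.zero < t → t ≤ IV.one → (lvl F t).Nonempty →
        PseudoBL.IsFilter (lvl F t) := by
  constructor
  · rintro ⟨hmul, hmono⟩ t _ _ ⟨x0, hx0⟩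
    refine ⟨⟨x0, hx0⟩, ?_, ?_⟩
    · intro x hx y hy
      exact IV.le_trans' (⟨le_min hx.1 hy.1, le_min hx.2 hy.2⟩ : t ≤ rmin (F x) (F y))
        (hmul x y)
    · intro x hx y hxy
      exact IV.le_trans' hx (hmono x y hxy)
  · intro h
    constructor
    · intro x y
      rcases (rmin (F x) (F y)).eq_zero_or_zero_lt with h0 | h0
      · rw [h0]; exact IV.zero_le _
      · have hx : x ∈ lvl F (rmin (F x) (F y)) := IV.rmin_le_left _ _
        exact (h _ h0 (IV.le_one _) ⟨x, hx⟩).2.1 x hx y (IV.rmin_le_right _ _)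
    · intro x y hxy
      rcases (F x).eq_zero_or_zero_lt with h0 | h0
      · rw [h0]; exact IV.zero_le _
      · exact (h _ h0 (IV.le_one _) ⟨x, (⟨le_refl _, le_refl _⟩ : F x ≤ F x)⟩).2.2 x ⟨le_refl _, le_refl _⟩ y hxy
end
end

section
/- An interval valued fuzzy set F of a pseudo BL-algebra A is an interval valued (∈,∈∨q)-fuzzy filter if and only if for every interval number t with [0,0] < t ≤ [0.5,0.5], each nonempty level subset F_t = {x ∈ A : μ_F(x) ≥ t} is a filter of A. -/
noncomputable section

universe u

open PseudoBL

open IV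

namespace IV

lemma le_def_s10 {a b : IV} : a ≤ b ↔ a.lo ≤ b.lo ∧ a.hi ≤ b.hi := Iff.rfl

lemma le_trans'_s10 {a b c : IV} (h1 : a ≤ b) (h2 : b ≤ c) : a ≤ c :=
  ⟨h1.1.trans h2.1, h1.2.trans h2.2⟩

lemma zero_le_s10 (a : IV) : IV.zero ≤ a :=
  ⟨a.lo_nonneg, a.lo_nonneg.trans a.lo_le_hi⟩

lemma rmin_le_left_s10 (a b : IV) : rmin a b ≤ a := ⟨min_le_left _ _, min_le_left _ _⟩
lemma rmin_le_right_s10 (a b : IV) : rmin a b ≤ b := ⟨min_le_right _ _, min_le_right _ _⟩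
lemma le_rmin {a b c : IV} (h1 : a ≤ b) (h2 : a ≤ c) : a ≤ rmin b c :=
  ⟨le_min h1.1 h2.1, le_min h1.2 h2.2⟩

end IV

theorem stmt10 {A : Type u} [PseudoBL A] (F : A → IV) :
    InqFilter F ↔
      ∀ t : IV, IV.zero < t → t ≤ IV.half → (lvl F t).Nonempty →
        PseudoBL.IsFilter (lvl F t) := by
  constructor
  · rintro ⟨h1, h2⟩ t ht0 tht ⟨z, hz⟩
    refine ⟨⟨z, hz⟩, ?_, ?_⟩
    · intro x hx y hy
      have : t ≤ rmin (F x) (rmin (F y) half) :=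
        le_rmin hx (le_rmin hy tht)
      exact IV.le_trans'_s10 this (h1 x y)
    · intro x hx y hxy
      exact IV.le_trans'_s10 (le_rmin hx tht) (h2 x y hxy)
  · intro h
    constructor
    · intro x y
      set t := rmin (F x) (rmin (F y) half) with htdef
      by_cases ht : t = IV.zero
      · rw [ht]; exact IV.zero_le_s10 _
      · have ht0 : IV.zero < t := ⟨IV.zero_le_s10 t, fun e => ht e.symm⟩
        have tht : t ≤ IV.half := IV.le_trans'_s10 (rmin_le_right_s10 _ _) (rmin_le_right_s10 _ _)
        have hx : x ∈ lvl F t := rmin_le_left_s10 _ _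
        have hy : y ∈ lvl F t := IV.le_trans'_s10 (rmin_le_right_s10 _ _) (rmin_le_left_s10 _ _)
        exact (h t ht0 tht ⟨x, hx⟩).2.1 x hx y hy
    · intro x y hxy
      set t := rmin (F x) IV.half with htdef
      by_cases ht : t = IV.zero
      · rw [ht]; exact IV.zero_le_s10 _
      · have ht0 : IV.zero < t := ⟨IV.zero_le_s10 t, fun e => ht e.symm⟩
        have tht : t ≤ IV.half := rmin_le_right_s10 _ _
        have hx : x ∈ lvl F t := rmin_le_left_s10 _ _
        exact (h t ht0 tht ⟨x, hx⟩).2.2 x hx y hxy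
end
end

section
/- Every interval valued (∈,∈∨q)-fuzzy implicative filter F of a pseudo BL-algebra A is an interval valued (∈,∈∨q)-fuzzy G-filter, i.e., μ_F(x → y) ≥ rmin{μ_F(x → (x → y)), [0.5,0.5]} and μ_F(x ↪ y) ≥ rmin{μ_F(x ↪ (x ↪ y)), [0.5,0.5]} for all x, y ∈ A. -/
noncomputable section

universe u

open PseudoBL

open IV

section Aux

lemma IV.rmin_mono_left {a b c : IV} (h : a ≤ b) : IV.rmin a c ≤ IV.rmin b c :=
  ⟨min_le_min h.1 le_rfl, min_le_min h.2 le_rfl⟩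

lemma IV.rmin_half_le {a : IV} : IV.rmin a IV.half ≤ IV.rmin (IV.rmin a IV.half) IV.half :=
  ⟨le_min le_rfl (min_le_right _ _), le_min le_rfl (min_le_right _ _)⟩

variable {A : Type u} [PseudoBL A]

lemma mul_mono_right' (c : A) {a b : A} (h : a ≤ b) : mul c a ≤ mul c b :=
  (res_limp c a (mul c b)).2 (h.trans ((res_limp c b (mul c b)).1 le_rfl))

lemma mul_mono_left' (c : A) {a b : A} (h : a ≤ b) : mul a c ≤ mul b c :=
  (res_rimp a c (mul b c)).2 (h.trans ((res_rimp b c (mul b c)).1 le_rfl))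

lemma key_rimp (x y : A) :
    rimp x (rimp x y) ≤ limp (rimp (rimp x y) y) (rimp x y) := by
  set u := rimp x y with hu
  apply (res_limp _ _ _).1
  apply (res_rimp _ x y).1
  rw [PseudoBL.mul_assoc]
  calc mul (rimp u y) (mul (rimp x u) x)
      ≤ mul (rimp u y) u := mul_mono_right' _ ((res_rimp (rimp x u) x u).2 le_rfl)
    _ ≤ y := (res_rimp (rimp u y) u y).2 le_rfl

lemma key_limp (x y : A) :
    limp x (limp x y) ≤ rimp (limp (limp x y) y) (limp x y) := by
  set u := limp x y with hu
  apply (res_rimp _ _ _).1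
  apply (res_limp x _ y).1
  rw [← PseudoBL.mul_assoc]
  calc mul (mul x (limp x u)) (limp u y)
      ≤ mul u (limp u y) := mul_mono_left' _ ((res_limp x (limp x u) u).2 le_rfl)
    _ ≤ y := (res_limp u (limp u y) y).2 le_rfl

end Aux

theorem stmt15 {A : Type u} [PseudoBL A] (F : A → IV)
    (hF : InqImplicative F) : InqG F := by
  obtain ⟨hfil, himp⟩ := hF
  refine ⟨hfil, fun x y => ⟨?_, ?_⟩⟩
  · have h1 := hfil.2 _ _ (key_rimp x y)
    have h2 := (himp (rimp x y) y).1
    exact IV.le_trans' IV.rmin_half_le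
      (IV.le_trans' (IV.rmin_mono_left h1) h2)
  · have h1 := hfil.2 _ _ (key_limp x y)
    have h2 := (himp (limp x y) y).2
    exact IV.le_trans' IV.rmin_half_le
      (IV.le_trans' (IV.rmin_mono_left h1) h2)
end
end

section
/- Let F be an interval valued (∈,∈∨q)-fuzzy filter of a pseudo BL-algebra A satisfying μ_F(x → y) = μ_F(x ↪ y) for all x, y ∈ A. Then F is an interval valued (∈,∈∨q)-fuzzy implicative filter if and only if F is both an interval valued (∈,∈∨q)-fuzzy MV-filter and an interval valued (∈,∈∨q)-fuzzy G-filter. -/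
noncomputable section

universe u

open PseudoBL

open IV

-- Auxiliary lemmas, to be inserted before stmt17

namespace IVAux

theorem le_def {a b : IV} : a ≤ b ↔ (a.lo ≤ b.lo ∧ a.hi ≤ b.hi) := Iff.rfl

theorem rmin_le_left (a b : IV) : rmin a b ≤ a :=
  le_def.mpr ⟨min_le_left _ _, min_le_left _ _⟩

theorem rmin_le_right (a b : IV) : rmin a b ≤ b :=
  le_def.mpr ⟨min_le_right _ _, min_le_right _ _⟩

theorem le_rmin {a b c : IV} (h1 : c ≤ a) (h2 : c ≤ b) : c ≤ rmin a b :=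
  le_def.mpr ⟨le_min (le_def.mp h1).1 (le_def.mp h2).1, le_min (le_def.mp h1).2 (le_def.mp h2).2⟩

theorem le_trans' {a b c : IV} (h1 : a ≤ b) (h2 : b ≤ c) : a ≤ c :=
  le_def.mpr ⟨(le_def.mp h1).1.trans (le_def.mp h2).1, (le_def.mp h1).2.trans (le_def.mp h2).2⟩

end IVAux

section PseudoBLAux

variable {A : Type u} [PseudoBL A]

theorem pbl_mul_le_mul_l {p q : A} (h : p ≤ q) (r : A) : mul p r ≤ mul q r :=
  (res_rimp p r (mul q r)).mpr (h.trans ((res_rimp q r (mul q r)).mp le_rfl))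

theorem pbl_mul_le_mul_r (r : A) {p q : A} (h : p ≤ q) : mul r p ≤ mul r q :=
  (res_limp r p (mul r q)).mpr (h.trans ((res_limp r q (mul r q)).mp le_rfl))

theorem pbl_mul_le_left (p q : A) : mul p q ≤ p := by
  have h := pbl_mul_le_mul_r p (le_top (a := q)); rwa [mul_top] at h

theorem pbl_mul_le_right (p q : A) : mul p q ≤ q := by
  have h := pbl_mul_le_mul_l (le_top (a := p)) q; rwa [top_mul] at h

theorem pbl_rimp_mul_le (p q : A) : mul (rimp p q) p ≤ q := (res_rimp _ _ _).mpr le_rfl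

theorem pbl_mul_limp_le (p q : A) : mul p (limp p q) ≤ q := (res_limp _ _ _).mpr le_rfl

theorem pbl_le_rimp_self (p q : A) : p ≤ rimp q p := (res_rimp _ _ _).mp (pbl_mul_le_left p q)

theorem pbl_le_limp_self (p q : A) : p ≤ limp q p := (res_limp _ _ _).mp (pbl_mul_le_right q p)

theorem pbl_rimp_le_rimp_r {q r : A} (p : A) (h : q ≤ r) : rimp p q ≤ rimp p r :=
  (res_rimp _ _ _).mp ((pbl_rimp_mul_le p q).trans h)

theorem pbl_rimp_le_rimp_l {p q : A} (h : p ≤ q) (r : A) : rimp q r ≤ rimp p r :=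
  (res_rimp _ _ _).mp ((pbl_mul_le_mul_r _ h).trans (pbl_rimp_mul_le q r))

theorem pbl_limp_le_limp_r {q r : A} (p : A) (h : q ≤ r) : limp p q ≤ limp p r :=
  (res_limp _ _ _).mp ((pbl_mul_limp_le p q).trans h)

theorem pbl_limp_le_limp_l {p q : A} (h : p ≤ q) (r : A) : limp q r ≤ limp p r :=
  (res_limp _ _ _).mp ((pbl_mul_le_mul_l h _).trans (pbl_mul_limp_le q r))

theorem pbl_sup_mul_le {p q r s : A} (h1 : mul p r ≤ s) (h2 : mul q r ≤ s) :
    mul (p ⊔ q) r ≤ s :=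
  (res_rimp _ _ _).mpr (sup_le ((res_rimp _ _ _).mp h1) ((res_rimp _ _ _).mp h2))

theorem pbl_mul_sup_le {p q r s : A} (h1 : mul r p ≤ s) (h2 : mul r q ≤ s) :
    mul r (p ⊔ q) ≤ s :=
  (res_limp _ _ _).mpr (sup_le ((res_limp _ _ _).mp h1) ((res_limp _ _ _).mp h2))

-- level lemmas
variable {F : A → IV} {t : IV}

theorem lvl_up (hF : InqFilter F) (ht : t ≤ half) {x y : A} (hx : t ≤ F x) (h : x ≤ y) :
    t ≤ F y :=
  IVAux.le_trans' (IVAux.le_rmin hx ht) (hF.2 x y h)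

theorem lvl_mul (hF : InqFilter F) (ht : t ≤ half) {x y : A} (hx : t ≤ F x) (hy : t ≤ F y) :
    t ≤ F (mul x y) :=
  IVAux.le_trans' (IVAux.le_rmin hx (IVAux.le_rmin hy ht)) (hF.1 x y)

theorem lvl_imp1 (hI : InqImplicative F) (ht : t ≤ half) {x y : A}
    (h : t ≤ F (limp (rimp x y) x)) : t ≤ F x :=
  IVAux.le_trans' (IVAux.le_rmin h ht) (hI.2 x y).1

theorem lvl_imp2 (hI : InqImplicative F) (ht : t ≤ half) {x y : A}
    (h : t ≤ F (rimp (limp x y) x)) : t ≤ F x :=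
  IVAux.le_trans' (IVAux.le_rmin h ht) (hI.2 x y).2

theorem lvl_G1 (hG : InqG F) (ht : t ≤ half) {x y : A}
    (h : t ≤ F (rimp x (rimp x y))) : t ≤ F (rimp x y) :=
  IVAux.le_trans' (IVAux.le_rmin h ht) (hG.2 x y).1

theorem lvl_G2 (hG : InqG F) (ht : t ≤ half) {x y : A}
    (h : t ≤ F (limp x (limp x y))) : t ≤ F (limp x y) :=
  IVAux.le_trans' (IVAux.le_rmin h ht) (hG.2 x y).2

theorem lvl_MV1 (hMV : InqMV F) (ht : t ≤ half) {x y : A}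
    (h : t ≤ F (rimp x y)) : t ≤ F (rimp (limp (rimp y x) x) y) :=
  IVAux.le_trans' (IVAux.le_rmin h ht) (hMV.2 x y).1

theorem lvl_MV2 (hMV : InqMV F) (ht : t ≤ half) {x y : A}
    (h : t ≤ F (limp x y)) : t ≤ F (limp (rimp (limp y x) x) y) :=
  IVAux.le_trans' (IVAux.le_rmin h ht) (hMV.2 x y).2

end PseudoBLAux

theorem stmt17 {A : Type u} [PseudoBL A] (F : A → IV) (hF : InqFilter F)
    (heq : ∀ x y : A, F (rimp x y) = F (limp x y)) :
    InqImplicative F ↔ (InqMV F ∧ InqG F) := by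
  constructor
  · intro hI
    refine ⟨⟨hI.1, fun x y => ⟨?_, ?_⟩⟩, ⟨hI.1, fun x y => ⟨?_, ?_⟩⟩⟩
    · -- MV, rimp version
      set t := rmin (F (rimp x y)) half with htd
      have ht : t ≤ half := IVAux.rmin_le_right _ _
      have hc : t ≤ F (rimp x y) := IVAux.rmin_le_left _ _
      have htop : t ≤ F ⊤ := lvl_up hI.1 ht hc le_top
      set s : A := y ⊔ rimp y ⊥ with hsd
      have hsb : rimp s ⊥ ≤ s :=
        (pbl_rimp_le_rimp_l le_sup_left ⊥).trans le_sup_right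
      have hmem : (⊤ : A) ≤ limp (rimp s ⊥) s :=
        (res_limp _ _ _).mp (by rw [mul_top]; exact hsb)
      have hs : t ≤ F s := lvl_imp1 hI ht (lvl_up hI.1 ht htop hmem)
      have hW : t ≤ F (mul (rimp x y) s) := lvl_mul hI.1 ht hc hs
      have hsa : mul s (limp (rimp y x) x) ≤ y ⊔ x := by
        refine pbl_sup_mul_le ((pbl_mul_le_left _ _).trans le_sup_left) ?_
        exact ((pbl_mul_le_mul_l (pbl_rimp_le_rimp_r y bot_le) _).trans
          (pbl_mul_limp_le (rimp y x) x)).trans le_sup_right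
      have key : mul (mul (rimp x y) s) (limp (rimp y x) x) ≤ y := by
        rw [PseudoBL.mul_assoc]
        refine (pbl_mul_le_mul_r (rimp x y) hsa).trans ?_
        exact pbl_mul_sup_le (pbl_mul_le_right _ _) (pbl_rimp_mul_le x y)
      exact lvl_up hI.1 ht hW ((res_rimp _ _ _).mp key)
    · -- MV, limp version
      set t := rmin (F (limp x y)) half with htd
      have ht : t ≤ half := IVAux.rmin_le_right _ _
      have hc : t ≤ F (limp x y) := IVAux.rmin_le_left _ _
      have htop : t ≤ F ⊤ := lvl_up hI.1 ht hc le_top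
      set s : A := y ⊔ limp y ⊥ with hsd
      have hsb : limp s ⊥ ≤ s :=
        (pbl_limp_le_limp_l le_sup_left ⊥).trans le_sup_right
      have hmem : (⊤ : A) ≤ rimp (limp s ⊥) s :=
        (res_rimp _ _ _).mp (by rw [top_mul]; exact hsb)
      have hs : t ≤ F s := lvl_imp2 hI ht (lvl_up hI.1 ht htop hmem)
      have hW : t ≤ F (mul s (limp x y)) := lvl_mul hI.1 ht hs hc
      have hsa : mul (rimp (limp y x) x) s ≤ y ⊔ x := by
        refine pbl_mul_sup_le ((pbl_mul_le_right _ _).trans le_sup_left) ?_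
        exact ((pbl_mul_le_mul_r _ (pbl_limp_le_limp_r y bot_le)).trans
          (pbl_rimp_mul_le (limp y x) x)).trans le_sup_right
      have key : mul (rimp (limp y x) x) (mul s (limp x y)) ≤ y := by
        rw [← PseudoBL.mul_assoc]
        refine (pbl_mul_le_mul_l hsa _).trans ?_
        exact pbl_sup_mul_le (pbl_mul_le_left _ _) (pbl_mul_limp_le x y)
      exact lvl_up hI.1 ht hW ((res_limp _ _ _).mp key)
    · -- G, rimp version
      set t := rmin (F (rimp x (rimp x y))) half with htd
      have ht : t ≤ half := IVAux.rmin_le_right _ _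
      have hu : t ≤ F (rimp x (rimp x y)) := IVAux.rmin_le_left _ _
      have e1 : rimp x (rimp x y) ≤ limp (rimp (rimp x y) y) (rimp x y) := by
        refine (res_limp _ _ _).mp ((res_rimp _ _ _).mp ?_)
        rw [PseudoBL.mul_assoc]
        exact (pbl_mul_le_mul_r _ (pbl_rimp_mul_le x (rimp x y))).trans
          (pbl_rimp_mul_le (rimp x y) y)
      exact lvl_imp1 hI ht (lvl_up hI.1 ht hu e1)
    · -- G, limp version
      set t := rmin (F (limp x (limp x y))) half with htd
      have ht : t ≤ half := IVAux.rmin_le_right _ _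
      have hu : t ≤ F (limp x (limp x y)) := IVAux.rmin_le_left _ _
      have e1 : limp x (limp x y) ≤ rimp (limp (limp x y) y) (limp x y) := by
        refine (res_rimp _ _ _).mp ((res_limp _ _ _).mp ?_)
        rw [← PseudoBL.mul_assoc]
        exact (pbl_mul_le_mul_l (pbl_mul_limp_le x (limp x y)) _).trans
          (pbl_mul_limp_le (limp x y) y)
      exact lvl_imp2 hI ht (lvl_up hI.1 ht hu e1)
  · rintro ⟨hMV, hG⟩
    refine ⟨hMV.1, fun x y => ⟨?_, ?_⟩⟩
    · -- first implicativity condition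
      set t := rmin (F (limp (rimp x y) x)) half with htd
      have ht : t ≤ half := IVAux.rmin_le_right _ _
      have hu : t ≤ F (limp (rimp x y) x) := IVAux.rmin_le_left _ _
      have e1 : limp (rimp x y) x ≤ limp (rimp x y) (limp (rimp x y) y) := by
        refine (res_limp _ _ _).mp ((res_limp _ _ _).mp ?_)
        exact (pbl_mul_le_mul_r _ (pbl_mul_limp_le (rimp x y) x)).trans
          (pbl_rimp_mul_le x y)
      have hG2 : t ≤ F (limp (rimp x y) y) := lvl_G2 hG ht (lvl_up hMV.1 ht hu e1)
      have e2 : limp (rimp x y) x ≤ limp y x :=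
        (res_limp _ _ _).mp ((pbl_mul_le_mul_l (pbl_le_rimp_self y x) _).trans
          (pbl_mul_limp_le (rimp x y) x))
      have hyx : t ≤ F (rimp y x) := by
        rw [heq y x]; exact lvl_up hMV.1 ht hu e2
      have hMV1 : t ≤ F (rimp (limp (rimp x y) y) x) := lvl_MV1 hMV ht hyx
      have hmul : t ≤ F (mul (rimp (limp (rimp x y) y) x) (limp (rimp x y) y)) :=
        lvl_mul hMV.1 ht hMV1 hG2
      exact lvl_up hMV.1 ht hmul (pbl_rimp_mul_le (limp (rimp x y) y) x)
    · -- second implicativity condition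
      set t := rmin (F (rimp (limp x y) x)) half with htd
      have ht : t ≤ half := IVAux.rmin_le_right _ _
      have hu : t ≤ F (rimp (limp x y) x) := IVAux.rmin_le_left _ _
      have e1 : rimp (limp x y) x ≤ rimp (limp x y) (rimp (limp x y) y) := by
        refine (res_rimp _ _ _).mp ((res_rimp _ _ _).mp ?_)
        exact (pbl_mul_le_mul_l (pbl_rimp_mul_le (limp x y) x) _).trans
          (pbl_mul_limp_le x y)
      have hG1 : t ≤ F (rimp (limp x y) y) := lvl_G1 hG ht (lvl_up hMV.1 ht hu e1)
      have e2 : rimp (limp x y) x ≤ rimp y x :=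
        (res_rimp _ _ _).mp ((pbl_mul_le_mul_r _ (pbl_le_limp_self y x)).trans
          (pbl_rimp_mul_le (limp x y) x))
      have hyx : t ≤ F (limp y x) := by
        rw [← heq y x]; exact lvl_up hMV.1 ht hu e2
      have hMV2 : t ≤ F (limp (rimp (limp x y) y) x) := lvl_MV2 hMV ht hyx
      have hmul : t ≤ F (mul (rimp (limp x y) y) (limp (rimp (limp x y) y) x)) :=
        lvl_mul hMV.1 ht hG1 hMV2
      exact lvl_up hMV.1 ht hmul (pbl_mul_limp_le (rimp (limp x y) y) x)
end
end
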